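/- Let n = p^a q^b, where p and q are distinct primes and a, b ≥ 2. Then the independence number of the prime-coprime graph of the cyclic group Z_n equals n − min{p^a q, p q^b, p^a + q^b − 1}. -/

import Mathlib

/-- The prime-coprime graph: distinct vertices `g, h` are adjacent iff
`gcd (orderOf g) (orderOf h)` is `1` or a prime. -/
def primeCoprimeGraph (G : Type*) [Monoid G] : SimpleGraph G where
  Adj g h := g ≠ h ∧
    (Nat.gcd (orderOf g) (orderOf h) = 1 ∨ (Nat.gcd (orderOf g) (orderOf h)).Prime)
  symm := by
    constructor
    rintro g h ⟨hne, hd⟩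
    exact ⟨hne.symm, by rwa [Nat.gcd_comm]⟩
  loopless := by constructor; rintro g ⟨hne, -⟩; exact hne rfl

/-- A set of vertices is independent if no two of its elements are adjacent. -/
def IsIndepSet {V : Type*} (Γ : SimpleGraph V) (s : Set V) : Prop :=
  s.Pairwise fun a b => ¬ Γ.Adj a b

open scoped Classical in
/-- The independence number of a graph on a finite vertex set. -/
noncomputable def indepNum {V : Type*} [Fintype V] (Γ : SimpleGraph V) : ℕ :=
  Finset.univ.sup fun s : Finset V => if IsIndepSet Γ (s : Set V) then s.card else 0

/-- A graph is split if its vertex set can be partitioned into two disjoint nonempty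
subsets, one a clique and the other an independent set. -/
def IsSplit {V : Type*} (Γ : SimpleGraph V) : Prop :=
  ∃ K I : Set V, K.Nonempty ∧ I.Nonempty ∧ Disjoint K I ∧ K ∪ I = Set.univ ∧
    Γ.IsClique K ∧ IsIndepSet Γ I

/-!
Two distinct elements are non-adjacent exactly when the gcd of their orders is divisible by
`p²`, `q²` or `pq`. Hence each of the three sets of elements whose order is divisible by `p²`,
by `q²`, or by `pq` is independent; and since the first two lie in the sets of elements of order
divisible by `p` resp. `q`, a pigeonhole argument confines every independent set with at least
two elements to one of the three. In a cyclic group of order `n` there are exactly `d` elements of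
order dividing `d ∣ n`, and the complements of the three sets consist of the elements of order
dividing `pqᵇ`, `pᵃq`, and `pᵃ` or `qᵇ`, respectively.
-/

open Finset

namespace Nat

theorem dvd_pow_mul_iff_not_pow_succ_dvd {p r m a i : ℕ} (hp : p.Prime) (hpr : ¬p ∣ r)
    (hm : m ∣ p ^ a * r) : m ∣ p ^ i * r ↔ ¬p ^ (i + 1) ∣ m := by
  constructor
  · intro h hdvd
    have : p ^ i * p ∣ p ^ i * r := pow_succ p i ▸ hdvd.trans h
    exact hpr (Nat.dvd_of_mul_dvd_mul_left (pow_pos hp.pos i) this)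
  · intro h
    obtain ⟨m₁, m₂, hm₁, hm₂, rfl⟩ := _root_.dvd_mul.mp hm
    obtain ⟨k, -, rfl⟩ := (Nat.dvd_prime_pow hp).mp hm₁
    have hki : k ≤ i := by
      by_contra! hik
      exact h ((pow_dvd_pow p hik).trans (dvd_mul_right _ _))
    exact mul_dvd_mul (pow_dvd_pow p hki) hm₂

theorem mul_dvd_iff_not_dvd_pow_or_dvd_pow {p q a b m : ℕ} (hp : p.Prime) (hq : q.Prime)
    (hpq : p ≠ q) (hm : m ∣ p ^ a * q ^ b) :
    p * q ∣ m ↔ ¬(m ∣ p ^ a ∨ m ∣ q ^ b) := by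
  have hp_pow : m ∣ q ^ b ↔ ¬p ∣ m := by
    simpa using dvd_pow_mul_iff_not_pow_succ_dvd (i := 0) hp
      (fun h => hpq (prime_eq_prime_of_dvd_pow hp hq h)) hm
  have hq_pow : m ∣ p ^ a ↔ ¬q ∣ m := by
    simpa using dvd_pow_mul_iff_not_pow_succ_dvd (i := 0) hq
      (fun h => hpq (prime_eq_prime_of_dvd_pow hq hp h).symm) (mul_comm (p ^ a) (q ^ b) ▸ hm)
  rw [hp_pow, hq_pow, not_or, not_not, not_not]
  exact ⟨fun h => ⟨(dvd_mul_left q p).trans h, (dvd_mul_right p q).trans h⟩,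
    fun ⟨hqm, hpm⟩ => hp.dvd_mul_of_dvd_ne hpq hq hpm hqm⟩

theorem not_eq_one_or_prime_of_mul_dvd {r s m : ℕ} (hr : r.Prime) (hs : s.Prime)
    (h : r * s ∣ m) : ¬(m = 1 ∨ m.Prime) := by
  have hrs : r * s ≠ 1 := fun h => hr.ne_one (Nat.eq_one_of_mul_eq_one_right h)
  rintro (rfl | hm)
  · exact hrs (Nat.eq_one_of_dvd_one h)
  · rcases (Nat.dvd_prime hm).mp h with h | h
    · exact hrs h
    · exact Nat.not_prime_mul hr.ne_one hs.ne_one (h ▸ hm)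

theorem exists_prime_mul_prime_dvd {m : ℕ} (h1 : m ≠ 1) (hm : ¬m.Prime) :
    ∃ r s, r.Prime ∧ s.Prime ∧ r * s ∣ m := by
  obtain ⟨k, hk⟩ := m.minFac_dvd
  have hk1 : k ≠ 1 := by
    rintro rfl
    exact hm (by rw [hk, mul_one]; exact Nat.minFac_prime h1)
  exact ⟨m.minFac, k.minFac, Nat.minFac_prime h1, Nat.minFac_prime hk1,
    (mul_dvd_mul_left m.minFac k.minFac_dvd).trans hk.symm.dvd⟩

theorem Prime.eq_or_eq_of_dvd_pow_mul_pow {p q r a b : ℕ} (hr : r.Prime) (hp : p.Prime)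
    (hq : q.Prime) (h : r ∣ p ^ a * q ^ b) : r = p ∨ r = q :=
  (hr.dvd_mul.mp h).imp (prime_eq_prime_of_dvd_pow hr hp) (prime_eq_prime_of_dvd_pow hr hq)

theorem sq_dvd_or_sq_dvd_or_mul_dvd {p q a b m : ℕ} (hp : p.Prime) (hq : q.Prime)
    (hm : m ∣ p ^ a * q ^ b) (h : ¬(m = 1 ∨ m.Prime)) :
    p ^ 2 ∣ m ∨ q ^ 2 ∣ m ∨ p * q ∣ m := by
  push Not at h
  obtain ⟨r, s, hr, hs, hrs⟩ := exists_prime_mul_prime_dvd h.1 h.2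
  have hdvd (t : ℕ) (ht : t ∣ r * s) : t ∣ p ^ a * q ^ b := ht.trans (hrs.trans hm)
  rcases hr.eq_or_eq_of_dvd_pow_mul_pow hp hq (hdvd r (dvd_mul_right r s)) with rfl | rfl <;>
    rcases hs.eq_or_eq_of_dvd_pow_mul_pow hp hq (hdvd s (dvd_mul_left s r)) with rfl | rfl
  · left; rwa [sq]
  · right; right; exact hrs
  · right; right; rwa [mul_comm]
  · right; left; rwa [sq]

end Nat

theorem Set.Nontrivial.subset_or_subset_of_pairwise {α : Type*} {s A Q : Set α}
    (hs : s.Nontrivial) (h : s.Pairwise fun x y => x ∈ A ∧ y ∈ A ∨ x ∈ Q ∧ y ∈ Q) :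
    s ⊆ A ∨ s ⊆ Q := by
  refine or_iff_not_imp_left.mpr fun hA w hw => by_contra fun hwQ => ?_
  obtain ⟨u, hu, huA⟩ := Set.not_subset.mp hA
  by_cases huw : u = w
  · subst huw
    obtain ⟨z, hz, hzu⟩ := hs.exists_ne u
    rcases h hu hz hzu.symm with ⟨h, -⟩ | ⟨h, -⟩
    exacts [huA h, hwQ h]
  · rcases h hu hw huw with ⟨h, -⟩ | ⟨-, h⟩
    exacts [huA h, hwQ h]

section IndepNum

variable {V : Type*} [Fintype V] {Γ : SimpleGraph V}

theorem card_le_indepNum {s : Finset V} (hs : IsIndepSet Γ s) : #s ≤ indepNum Γ := by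
  classical
  unfold indepNum
  exact le_trans (by simp [hs]) (le_sup (mem_univ s))

theorem indepNum_le {k : ℕ} (h : ∀ s : Finset V, IsIndepSet Γ s → #s ≤ k) :
    indepNum Γ ≤ k := by
  classical
  unfold indepNum
  refine Finset.sup_le fun s _ => ?_
  split_ifs with hs
  exacts [h s hs, k.zero_le]

end IndepNum

namespace primeCoprimeGraph

variable {G : Type*} [Monoid G]

theorem isIndepSet_setOf_mul_dvd_orderOf {r s : ℕ} (hr : r.Prime) (hs : s.Prime) :
    IsIndepSet (primeCoprimeGraph G) {x | r * s ∣ orderOf x} := fun _ hx _ hy _ hadj =>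
  Nat.not_eq_one_or_prime_of_mul_dvd hr hs (Nat.dvd_gcd hx hy) hadj.2

theorem subset_or_subset_or_subset_of_isIndepSet {p q a b : ℕ} (hp : p.Prime) (hq : q.Prime)
    (hpq : p ≠ q) (horder : ∀ x : G, orderOf x ∣ p ^ a * q ^ b) {s : Set G}
    (hs : IsIndepSet (primeCoprimeGraph G) s) (hnt : s.Nontrivial) :
    s ⊆ {x | p ^ 2 ∣ orderOf x} ∨ s ⊆ {x | q ^ 2 ∣ orderOf x} ∨
      s ⊆ {x | p * q ∣ orderOf x} := by
  have hclass : s.Pairwise fun x y => p ^ 2 ∣ Nat.gcd (orderOf x) (orderOf y) ∨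
      q ^ 2 ∣ Nat.gcd (orderOf x) (orderOf y) ∨ p * q ∣ Nat.gcd (orderOf x) (orderOf y) :=
    fun x hx y hy hxy => Nat.sq_dvd_or_sq_dvd_or_mul_dvd hp hq
      ((Nat.gcd_dvd_left _ _).trans (horder x)) fun h => hs hx hy hxy ⟨hxy, h⟩
  have hpq_cases : s ⊆ {x | p ^ 2 ∣ orderOf x} ∨ s ⊆ {x | q ∣ orderOf x} := by
    refine hnt.subset_or_subset_of_pairwise (hclass.imp ?_)
    rintro x y (h | h | h)
    · exact Or.inl (Nat.dvd_gcd_iff.mp h)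
    · exact Or.inr (Nat.dvd_gcd_iff.mp ((dvd_pow_self q two_ne_zero).trans h))
    · exact Or.inr (Nat.dvd_gcd_iff.mp ((dvd_mul_left q p).trans h))
  have hqp_cases : s ⊆ {x | q ^ 2 ∣ orderOf x} ∨ s ⊆ {x | p ∣ orderOf x} := by
    refine hnt.subset_or_subset_of_pairwise (hclass.imp ?_)
    rintro x y (h | h | h)
    · exact Or.inr (Nat.dvd_gcd_iff.mp ((dvd_pow_self p two_ne_zero).trans h))
    · exact Or.inl (Nat.dvd_gcd_iff.mp h)
    · exact Or.inr (Nat.dvd_gcd_iff.mp ((dvd_mul_right p q).trans h))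
  rcases hpq_cases with hP2 | hQ
  · exact Or.inl hP2
  rcases hqp_cases with hQ2 | hP
  · exact Or.inr (Or.inl hQ2)
  exact Or.inr (Or.inr fun x hx => hp.dvd_mul_of_dvd_ne hpq hq (hP hx) (hQ hx))

theorem indepNum_eq_max [Fintype G] {p q a b : ℕ} (hp : p.Prime) (hq : q.Prime) (hpq : p ≠ q)
    (horder : ∀ x : G, orderOf x ∣ p ^ a * q ^ b) :
    indepNum (primeCoprimeGraph G) = max 1 (max #{x : G | p ^ 2 ∣ orderOf x}
      (max #{x : G | q ^ 2 ∣ orderOf x} #{x : G | p * q ∣ orderOf x})) := by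
  refine le_antisymm (indepNum_le fun s hs => ?_) (max_le ?_ (max_le ?_ (max_le ?_ ?_)))
  · by_cases hs1 : #s ≤ 1
    · exact le_max_of_le_left hs1
    have hnt : (s : Set G).Nontrivial := one_lt_card_iff_nontrivial.mp (by omega)
    rcases subset_or_subset_or_subset_of_isIndepSet hp hq hpq horder hs hnt with h | h | h <;>
    · have := card_le_card (s := s) (fun x hx => mem_filter.mpr ⟨mem_univ x, h hx⟩)
      simp only [Set.mem_ofPred_eq] at this
      omega
  · simpa using card_le_indepNum (Γ := primeCoprimeGraph G) (s := {1}) (by simp [IsIndepSet])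
  · refine card_le_indepNum ?_
    simpa only [coe_filter_univ, sq] using isIndepSet_setOf_mul_dvd_orderOf (G := G) hp hp
  · refine card_le_indepNum ?_
    simpa only [coe_filter_univ, sq] using isIndepSet_setOf_mul_dvd_orderOf (G := G) hq hq
  · refine card_le_indepNum ?_
    simpa only [coe_filter_univ] using isIndepSet_setOf_mul_dvd_orderOf (G := G) hp hq

end primeCoprimeGraph

section Cyclic

variable {G : Type*} [Group G] [Fintype G] [DecidableEq G] [IsCyclic G]

theorem IsCyclic.card_filter_orderOf_dvd {d : ℕ} (hd : d ∣ Fintype.card G) :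
    #{x : G | orderOf x ∣ d} = d := by
  have hd0 : d ≠ 0 := ne_zero_of_dvd_ne_zero Fintype.card_ne_zero hd
  simp_rw [orderOf_dvd_iff_pow_eq_one]
  rw [← sum_card_orderOf_eq_card_pow_eq_one hd0]
  exact (sum_congr rfl fun m hm => IsCyclic.card_orderOf_eq_totient
    ((Nat.dvd_of_mem_divisors hm).trans hd)).trans (Nat.sum_totient d)

theorem IsCyclic.card_filter_pow_succ_dvd_orderOf {p r a i : ℕ} (hp : p.Prime) (hpr : ¬p ∣ r)
    (hi : i ≤ a) (hG : Fintype.card G = p ^ a * r) :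
    #{x : G | p ^ (i + 1) ∣ orderOf x} = Fintype.card G - p ^ i * r := by
  have hcompl : #{x : G | ¬p ^ (i + 1) ∣ orderOf x} = p ^ i * r := by
    rw [← card_filter_orderOf_dvd (d := p ^ i * r)
      (hG ▸ mul_dvd_mul_right (pow_dvd_pow p hi) r)]
    refine congrArg card (filter_congr fun x _ => ?_)
    exact (Nat.dvd_pow_mul_iff_not_pow_succ_dvd hp hpr (hG ▸ orderOf_dvd_card)).symm
  have := card_filter_add_card_filter_not (s := univ) fun x : G => p ^ (i + 1) ∣ orderOf x
  rw [card_univ, hcompl] at this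
  omega

theorem IsCyclic.card_filter_mul_dvd_orderOf {p q a b : ℕ} (hp : p.Prime) (hq : q.Prime)
    (hpq : p ≠ q) (hG : Fintype.card G = p ^ a * q ^ b) :
    #{x : G | p * q ∣ orderOf x} = Fintype.card G - (p ^ a + q ^ b - 1) := by
  have hcompl : #{x : G | ¬p * q ∣ orderOf x} =
      #{x : G | orderOf x ∣ p ^ a ∨ orderOf x ∣ q ^ b} :=
    congrArg card <| filter_congr fun x _ => by
      rw [Nat.mul_dvd_iff_not_dvd_pow_or_dvd_pow hp hq hpq (hG ▸ orderOf_dvd_card), not_not]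
  have hinter : #{x : G | orderOf x ∣ p ^ a ∧ orderOf x ∣ q ^ b} = 1 := by
    have hcop : Nat.Coprime (p ^ a) (q ^ b) := ((Nat.coprime_primes hp hq).mpr hpq).pow a b
    simp_rw [← Nat.dvd_gcd_iff, hcop.gcd_eq_one]
    exact card_filter_orderOf_dvd (one_dvd _)
  have hunion := card_union_add_card_inter
    ({x : G | orderOf x ∣ p ^ a} : Finset G) {x : G | orderOf x ∣ q ^ b}
  rw [← filter_or, ← filter_and, hinter, card_filter_orderOf_dvd (hG ▸ dvd_mul_right _ _),
    card_filter_orderOf_dvd (hG ▸ dvd_mul_left _ _)] at hunion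
  have hsplit := card_filter_add_card_filter_not (s := univ) fun x : G => p * q ∣ orderOf x
  rw [card_univ] at hsplit
  omega

end Cyclic

theorem indepNum_cyclic_paqb (n p q a b : ℕ) [NeZero n] (hp : p.Prime) (hq : q.Prime)
    (hpq : p ≠ q) (ha : 2 ≤ a) (hb : 2 ≤ b) (hn : n = p ^ a * q ^ b) :
    indepNum (primeCoprimeGraph (Multiplicative (ZMod n))) =
      n - min (p ^ a * q) (min (p * q ^ b) (p ^ a + q ^ b - 1)) := by
  have hG : Fintype.card (Multiplicative (ZMod n)) = p ^ a * q ^ b := by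
    rw [Fintype.card_multiplicative, ZMod.card, hn]
  have hGqp : Fintype.card (Multiplicative (ZMod n)) = q ^ b * p ^ a := hG.trans (mul_comm _ _)
  have hP2 := IsCyclic.card_filter_pow_succ_dvd_orderOf (i := 1) hp
    (fun h => hpq (Nat.prime_eq_prime_of_dvd_pow hp hq h)) (by omega) hG
  have hQ2 := IsCyclic.card_filter_pow_succ_dvd_orderOf (i := 1) hq
    (fun h => hpq (Nat.prime_eq_prime_of_dvd_pow hq hp h).symm) (by omega) hGqp
  have hPQ := IsCyclic.card_filter_mul_dvd_orderOf hp hq hpq hG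
  rw [primeCoprimeGraph.indepNum_eq_max hp hq hpq fun x => hG ▸ orderOf_dvd_card]
  simp only [Nat.reduceAdd, pow_one] at hP2 hQ2
  rw [hP2, hQ2, hPQ, hG, ← hn, mul_comm q]
  have hp_lt : p < p ^ a := by simpa using pow_lt_pow_right₀ hp.one_lt (show 1 < a by omega)
  -- `n - min _ _ = max (n - _) (n - _)`, and `p * q ^ b < n` absorbs the `max 1`.
  have hpqb : p * q ^ b < n := hn ▸ Nat.mul_lt_mul_of_pos_right hp_lt (pow_pos hq.pos b)
  omega
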